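/- For every positive integer k there exists a finite connected graph G such that Γρ(G) − χρ(G) ≥ k. -/

import Mathlib

open SimpleGraph

/-- A packing `k`-coloring of `G`: colors in `{1,…,k}` and vertices of equal color `i`
are at distance greater than `i` (vertices in different components are unconstrained). -/
def IsPackingColoring {V : Type*} (G : SimpleGraph V) (k : ℕ) (c : V → ℕ) : Prop :=
  (∀ v, 1 ≤ c v ∧ c v ≤ k) ∧
  ∀ u v, u ≠ v → c u = c v → G.Reachable u v → c u < G.dist u v

/-- A greedy packing `k`-coloring: a packing `k`-coloring that uses color `k` and in which
every vertex of color `i ≥ 2` has, for every `j < i`, a vertex of color `j`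
at distance at most `j`. -/
def IsGreedyPackingColoring {V : Type*} (G : SimpleGraph V) (k : ℕ) (c : V → ℕ) : Prop :=
  IsPackingColoring G k c ∧ (∃ v, c v = k) ∧
  ∀ v, ∀ j, 1 ≤ j → j < c v → ∃ u, c u = j ∧ G.Reachable u v ∧ G.dist u v ≤ j

/-- The Grundy packing chromatic number: the largest `k` admitting a greedy packing
`k`-coloring. -/
noncomputable def grundyPackingChromaticNumber {V : Type*} (G : SimpleGraph V) : ℕ :=
  sSup {k | ∃ c : V → ℕ, IsGreedyPackingColoring G k c}

/-- The packing chromatic number: the smallest `k` admitting a packing `k`-coloring. -/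
noncomputable def packingChromaticNumber {V : Type*} (G : SimpleGraph V) : ℕ :=
  sInf {k | ∃ c : V → ℕ, IsPackingColoring G k c}

/-- `s` is an independent set of `G`. -/
def IsIndepFinset {V : Type*} (G : SimpleGraph V) (s : Finset V) : Prop :=
  ∀ u ∈ s, ∀ v ∈ s, ¬ G.Adj u v

/-- `s` is a maximal independent set of `G`. -/
def IsMaxIndepFinset {V : Type*} (G : SimpleGraph V) (s : Finset V) : Prop :=
  IsIndepFinset G s ∧ ∀ t : Finset V, IsIndepFinset G t → s ⊆ t → s = t

/-- The independent domination number `i(G)`: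
the minimum cardinality of a maximal independent set. -/
noncomputable def indepDomNum {V : Type*} (G : SimpleGraph V) [Fintype V] : ℕ :=
  sInf {n | ∃ s : Finset V, IsMaxIndepFinset G s ∧ s.card = n}

/-- The graph `G^ℓ`: same vertices, `u ∼ v` iff `u ≠ v` and `d_G(u,v) ≤ ℓ`. -/
def distPow {V : Type*} (G : SimpleGraph V) (ℓ : ℕ) : SimpleGraph V where
  Adj u v := u ≠ v ∧ G.dist u v ≤ ℓ
  symm := by
    constructor
    rintro u v ⟨h1, h2⟩
    exact ⟨h1.symm, by rwa [SimpleGraph.dist_comm]⟩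
  loopless := by constructor; rintro v ⟨h, _⟩; exact h rfl

/-- The graph `G(k)`: vertex set is `k` disjoint copies of `V(G)`, the copy `i : Fin k`
playing the role of `G^(i+1)`; the `k` copies of each vertex form a clique, and within the
`i`-th copy two distinct vertices are adjacent iff their distance in `G` is at most `i+1`. -/
def levelGraph {V : Type*} (G : SimpleGraph V) (k : ℕ) : SimpleGraph (V × Fin k) where
  Adj p q := (p.1 = q.1 ∧ p.2 ≠ q.2) ∨
    (p.1 ≠ q.1 ∧ p.2 = q.2 ∧ G.dist p.1 q.1 ≤ (p.2 : ℕ) + 1)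
  symm := by
    constructor
    rintro p q (⟨h1, h2⟩ | ⟨h1, h2, h3⟩)
    · exact Or.inl ⟨h1.symm, h2.symm⟩
    · refine Or.inr ⟨h1.symm, h2.symm, ?_⟩
      rw [SimpleGraph.dist_comm, ← h2]
      exact h3
  loopless := by constructor; rintro p (⟨_, h⟩ | ⟨h, _, _⟩) <;> exact h rfl

/-- `A` is a maximal independent set of the subgraph of `H` induced on `S`. -/
def IsMaxIndepSetOn {V : Type*} (H : SimpleGraph V) (S : Set V) (A : Set V) : Prop :=
  A ⊆ S ∧ (∀ u ∈ A, ∀ v ∈ A, ¬ H.Adj u v) ∧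
  ∀ B : Set V, B ⊆ S → (∀ u ∈ B, ∀ v ∈ B, ¬ H.Adj u v) → A ⊆ B → A = B

/-- The eccentricity of a vertex. -/
noncomputable def eccent {V : Type*} (G : SimpleGraph V) [Fintype V] (v : V) : ℕ :=
  Finset.univ.sup (fun u => G.dist v u)

/-- The radius of a graph. -/
noncomputable def graphRadius {V : Type*} (G : SimpleGraph V) [Fintype V] : ℕ :=
  sInf (Set.range (eccent G))

/-- The diameter of a graph. -/
noncomputable def graphDiam {V : Type*} (G : SimpleGraph V) [Fintype V] : ℕ :=
  Finset.univ.sup (eccent G)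

/-- The diametrical graph `D(G)`: `x ∼ y` iff `d_G(x,y) = diam(G)`. -/
noncomputable def diamGraph {V : Type*} (G : SimpleGraph V) [Fintype V] : SimpleGraph V where
  Adj u v := u ≠ v ∧ G.dist u v = graphDiam G
  symm := by
    constructor
    rintro u v ⟨h1, h2⟩
    exact ⟨h1.symm, by rwa [SimpleGraph.dist_comm]⟩
  loopless := by constructor; rintro v ⟨h, _⟩; exact h rfl

/-- `Q` is a clique of the subgraph of `H` induced on `S`. -/
def IsCliqueFinsetOn {V : Type*} (H : SimpleGraph V) (S : Set V) (Q : Finset V) : Prop :=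
  ↑Q ⊆ S ∧ ∀ u ∈ Q, ∀ v ∈ Q, u ≠ v → H.Adj u v

/-- `Q` is a maximal clique of the subgraph of `H` induced on `S`. -/
def IsMaxCliqueFinsetOn {V : Type*} (H : SimpleGraph V) (S : Set V) (Q : Finset V) : Prop :=
  IsCliqueFinsetOn H S Q ∧ ∀ R : Finset V, IsCliqueFinsetOn H S R → Q ⊆ R → Q = R

/-- The join `G ∨ H` of two graphs. -/
def joinGraph {V W : Type*} (G : SimpleGraph V) (H : SimpleGraph W) :
    SimpleGraph (V ⊕ W) where
  Adj p q := match p, q with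
    | .inl u, .inl v => G.Adj u v
    | .inr u, .inr v => H.Adj u v
    | .inl _, .inr _ => True
    | .inr _, .inl _ => True
  symm := by
    constructor
    rintro (u | u) (v | v) h
    · exact h.symm
    · trivial
    · trivial
    · exact h.symm
  loopless := by
    constructor
    rintro (u | u) h
    · exact G.irrefl h
    · exact H.irrefl h

/-- `K_{n,n}` minus a perfect matching: parts `{u_i}` and `{v_i}`, with `u_i ∼ v_j` iff
`i ≠ j`. -/
def completeBipartiteMinusMatching (n : ℕ) : SimpleGraph (Fin n ⊕ Fin n) where
  Adj p q := match p, q with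
    | .inl i, .inr j => i ≠ j
    | .inr i, .inl j => i ≠ j
    | _, _ => False
  symm := by constructor; rintro (i | i) (j | j) h <;> first | exact h.symm | exact h
  loopless := by constructor; rintro (i | i) h <;> exact h

/-!
In the star `K_{1,k+1}` every vertex is within distance 1 of the center and within distance 2
of every other vertex, so giving the center color 1 and the leaves the distinct colors
`2, …, k+2` is a greedy packing coloring: `Γρ = k + 2`. On the other hand the leaves are
pairwise at distance 2, so all of them may share color 1 while the center gets color 2:
`χρ ≤ 2`.
-/

namespace SimpleGraph

variable {V : Type*} {G : SimpleGraph V} {r : V}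

lemma IsUniversal.dist_le_one (hr : G.IsUniversal r) (v : V) : G.dist r v ≤ 1 := by
  rcases eq_or_ne r v with rfl | h
  · simp
  · exact (dist_eq_one_iff_adj.2 (hr h)).le

lemma IsUniversal.dist_le_two (hr : G.IsUniversal r) (u v : V) : G.dist u v ≤ 2 := by
  have := (Connected.of_isUniversal hr).dist_triangle (u := u) (v := r) (w := v)
  linarith [dist_comm (G := G) (u := u) (v := r), hr.dist_le_one u, hr.dist_le_one v]

end SimpleGraph

section Greedy

variable {V : Type*} {G : SimpleGraph V} {k : ℕ} {c : V → ℕ}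

lemma IsGreedyPackingColoring.exists_eq (h : IsGreedyPackingColoring G k c) {j : ℕ}
    (hj : 1 ≤ j) (hjk : j ≤ k) : ∃ u, c u = j := by
  obtain ⟨-, ⟨v, hv⟩, hgreedy⟩ := h
  rcases hjk.eq_or_lt with rfl | hlt
  · exact ⟨v, hv⟩
  · obtain ⟨u, hu, -⟩ := hgreedy v j hj (hv ▸ hlt)
    exact ⟨u, hu⟩

lemma IsGreedyPackingColoring.le_card [Finite V] (h : IsGreedyPackingColoring G k c) :
    k ≤ Nat.card V := by
  choose f hf using fun i : Fin k => h.exists_eq (j := i + 1) (by omega) i.isLt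
  have hinj : Function.Injective f := fun i j hij =>
    Fin.ext (Nat.add_right_cancel ((hf i).symm.trans ((congrArg c hij).trans (hf j))))
  simpa using Nat.card_le_card_of_injective f hinj

lemma bddAbove_setOf_isGreedyPackingColoring [Finite V] :
    BddAbove {k | ∃ c : V → ℕ, IsGreedyPackingColoring G k c} :=
  ⟨Nat.card V, fun _ ⟨_, h⟩ => h.le_card⟩

lemma IsPackingColoring.of_injective (hc : ∀ v, 1 ≤ c v ∧ c v ≤ k)
    (hinj : Function.Injective c) : IsPackingColoring G k c :=
  ⟨hc, fun _ _ huv h _ => absurd (hinj h) huv⟩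

lemma isGreedyPackingColoring_of_isUniversal {r : V} {n : ℕ} (hr : G.IsUniversal r)
    (e : V ≃ Fin n) (he : (e r : ℕ) = 0) : IsGreedyPackingColoring G n (fun v => e v + 1) := by
  have hn : 0 < n := Fin.pos (e r)
  refine ⟨.of_injective (fun v => ⟨Nat.le_add_left 1 _, (e v).isLt⟩) ?_, ?_, ?_⟩
  · exact fun u v h => e.injective (Fin.ext (Nat.add_right_cancel h))
  · exact ⟨e.symm ⟨n - 1, by omega⟩, by simp only [Equiv.apply_symm_apply]; omega⟩
  · intro v j hj hjv
    change j < e v + 1 at hjv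
    have hjn : j - 1 < n := by have := (e v).isLt; omega
    set u := e.symm ⟨j - 1, hjn⟩
    have hu : (e u : ℕ) = j - 1 := by simp [u]
    refine ⟨u, by simp only [hu]; omega, (Connected.of_isUniversal hr).preconnected u v, ?_⟩
    rcases hj.eq_or_lt with rfl | hj2
    · have : u = r := e.injective (Fin.ext (by omega))
      exact this ▸ hr.dist_le_one v
    · linarith [hr.dist_le_two u v]

lemma grundyPackingChromaticNumber_eq_card_of_isUniversal [Finite V] {r : V}
    (hr : G.IsUniversal r) : grundyPackingChromaticNumber G = Nat.card V := by
  refine le_antisymm (csSup_le' fun _ ⟨_, h⟩ => h.le_card) (le_csSup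
    bddAbove_setOf_isGreedyPackingColoring ?_)
  let e₀ := Finite.equivFin V
  let e := e₀.trans (Equiv.swap (e₀ r) ⟨0, Fin.pos (e₀ r)⟩)
  exact ⟨_, isGreedyPackingColoring_of_isUniversal hr e (by simp [e])⟩

end Greedy

lemma packingChromaticNumber_starGraph_le_two {V : Type*} (r : V) :
    packingChromaticNumber (starGraph r) ≤ 2 := by
  classical
  refine Nat.sInf_le ⟨fun v => if v = r then 2 else 1,
    fun v => by dsimp only; split_ifs <;> omega, ?_⟩
  intro u v huv hc hreach
  by_cases hu : u = r
  · subst hu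
    simp [Ne.symm huv] at hc
  · have hv : v ≠ r := by rintro rfl; simp [hu] at hc
    have hpos := hreach.pos_dist_of_ne huv
    have hne : (starGraph r).dist u v ≠ 1 := by simp [dist_eq_one_iff_adj, hu, hv]
    simp only [hu, if_false]
    omega

theorem exists_graph_grundy_sub_packing_ge_general (k : ℕ) :
    ∃ (V : Type) (_ : Fintype V) (G : SimpleGraph V), G.Connected ∧
      k ≤ grundyPackingChromaticNumber G - packingChromaticNumber G := by
  refine ⟨Fin (k + 2), inferInstance, starGraph 0, connected_starGraph 0, ?_⟩
  have hΓ : grundyPackingChromaticNumber (starGraph (0 : Fin (k + 2))) = k + 2 := by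
    rw [grundyPackingChromaticNumber_eq_card_of_isUniversal isUniversal_starGraph_self,
      Nat.card_eq_fintype_card, Fintype.card_fin]
  have hχ := packingChromaticNumber_starGraph_le_two (0 : Fin (k + 2))
  omega

/-- For every positive integer `k` there exists a finite connected graph `G`
with `Γρ(G) - χρ(G) ≥ k`. -/
theorem exists_graph_grundy_sub_packing_ge (k : ℕ) (hk : 1 ≤ k) :
    ∃ (V : Type) (_ : Fintype V) (G : SimpleGraph V), G.Connected ∧
      k ≤ grundyPackingChromaticNumber G - packingChromaticNumber G :=
  exists_graph_grundy_sub_packing_ge_general k
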